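/- Let Γ be a group with no nontrivial homomorphism to an abelian group (i.e. Γ has trivial abelianization), H a nontrivial abelian group, 𝓗₀ = ker(p : H^(Γ) → H) where p(x) = Σ_g x_g, and 𝓖₀ = 𝓗₀ ⋊ (Γ × Γ). Then every homomorphism from 𝓖₀ to the circle group (equivalently, to any abelian group) is trivial. -/

import Mathlib

/-! Since `Γ` is perfect, so is `Γ × Γ`, and a homomorphism `φ` from `𝓖₀` to an abelian group
kills the `Γ × Γ` factor. On `𝓗₀`, `φ` is invariant under conjugation, hence under left
translation by `Γ`. For fixed `a ∈ H`, the identity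
`δ_{jk} a - δ_1 a = j • (δ_k a - δ_1 a) + (δ_j a - δ_1 a)` makes `j ↦ φ (δ_j a - δ_1 a)` a
homomorphism on `Γ`, so it vanishes; and these elements generate `𝓗₀`. To check that last point
on the generators `δ_j a` of `H^(Γ)`, extend `φ` from `𝓗₀` through the retraction
`x ↦ x - δ_1 (p x)`. -/

noncomputable section

/-- The left-right translation bijection `k ↦ g k h⁻¹` of `Γ` associated to `(g,h) ∈ Γ × Γ`. -/
def lrEquiv {Γ : Type*} [Group Γ] (p : Γ × Γ) : Γ ≃ Γ :=
  (Equiv.mulRight p.2⁻¹).trans (Equiv.mulLeft p.1)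

/-- The left-right action of `Γ × Γ` on the base `H^(Γ)` of the wreath product,
`((g,h)·x)_k = x_{g⁻¹ k h}`. -/
def lrAddAut (Γ H : Type*) [Group Γ] [AddCommGroup H] : (Γ × Γ) →* Multiplicative (AddAut (Γ →₀ H)) where
  toFun p := Multiplicative.ofAdd (Finsupp.domCongr (lrEquiv p) : (Γ →₀ H) ≃+ (Γ →₀ H))
  map_one' := by
    apply Multiplicative.toAdd.injective
    ext x k
    show x ((lrEquiv 1).symm k) = x k
    congr 1
    simp [lrEquiv]
    rfl
  map_mul' p q := by
    apply Multiplicative.toAdd.injective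
    ext x k
    show x ((lrEquiv (p * q)).symm k) = x ((lrEquiv q).symm ((lrEquiv p).symm k))
    congr 1
    simp only [lrEquiv, Prod.fst_mul, Prod.snd_mul, Equiv.symm_trans_apply,
      Equiv.mulLeft_symm, Equiv.mulRight_symm, Equiv.coe_mulLeft, Equiv.coe_mulRight, inv_inv]
    group

/-- The same action, as an action on the multiplicative version of `H^(Γ)`. -/
def lrMulAut (Γ H : Type*) [Group Γ] [AddCommGroup H] :
    (Γ × Γ) →* MulAut (Multiplicative (Γ →₀ H)) where
  toFun p := AddEquiv.toMultiplicative (Multiplicative.toAdd (lrAddAut Γ H p))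
  map_one' := by
    have h : lrAddAut Γ H 1 = 1 := map_one _
    refine MulEquiv.ext fun x => ?_
    show AddEquiv.toMultiplicative (Multiplicative.toAdd (lrAddAut Γ H 1)) x = x
    rw [h]
    rfl
  map_mul' p q := by
    have h : lrAddAut Γ H (p * q) = lrAddAut Γ H p * lrAddAut Γ H q := map_mul _ _ _
    refine MulEquiv.ext fun x => ?_
    show AddEquiv.toMultiplicative (Multiplicative.toAdd (lrAddAut Γ H (p * q))) x =
      (AddEquiv.toMultiplicative (Multiplicative.toAdd (lrAddAut Γ H p)) *
        AddEquiv.toMultiplicative (Multiplicative.toAdd (lrAddAut Γ H q))) x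
    rw [h]
    rfl

/-- The left-right wreath product `H^(Γ) ⋊ (Γ × Γ)`. -/
abbrev LRWreath (Γ H : Type*) [Group Γ] [AddCommGroup H] :=
  SemidirectProduct (Multiplicative (Γ →₀ H)) (Γ × Γ) (lrMulAut Γ H)

/-- The homomorphism `p : H^(Γ) → H` summing all coordinates. -/
def coordSum (Γ H : Type*) [Group Γ] [AddCommGroup H] : (Γ →₀ H) →+ H :=
  Finsupp.liftAddHom fun _ : Γ => AddMonoidHom.id H

end

lemma coordSum_equivMapDomain {Γ H : Type*} [Group Γ] [AddCommGroup H]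
    (e : Γ ≃ Γ) (z : Γ →₀ H) :
    coordSum Γ H (Finsupp.equivMapDomain e z) = coordSum Γ H z := by
  simp only [coordSum, Finsupp.liftAddHom_apply, Finsupp.equivMapDomain_eq_mapDomain]
  exact Finsupp.sum_mapDomain_index_inj e.injective

/-- The homomorphism `𝓖 → H` induced by summing the coordinates of the base. -/
noncomputable def lrSumHom (Γ H : Type*) [Group Γ] [AddCommGroup H] :
    LRWreath Γ H →* Multiplicative H where
  toFun x := Multiplicative.ofAdd (coordSum Γ H (Multiplicative.toAdd x.left))
  map_one' := by
    show Multiplicative.ofAdd (coordSum Γ H (Multiplicative.toAdd (1 : LRWreath Γ H).left)) = 1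
    rw [SemidirectProduct.one_left]
    simp
  map_mul' x y := by
    show Multiplicative.ofAdd (coordSum Γ H (Multiplicative.toAdd (x * y).left)) = _
    rw [SemidirectProduct.mul_left, toAdd_mul, map_add]
    have h2 : Multiplicative.toAdd ((lrMulAut Γ H x.right) y.left)
        = Finsupp.equivMapDomain (lrEquiv x.right) (Multiplicative.toAdd y.left) := rfl
    rw [h2, coordSum_equivMapDomain]
    rfl

/-- The subgroup `𝓖₀ = 𝓗₀ ⋊ (Γ × Γ)` of the left-right wreath product `𝓖`. -/
noncomputable def lrG0 (Γ H : Type*) [Group Γ] [AddCommGroup H] :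
    Subgroup (LRWreath Γ H) := (lrSumHom Γ H).ker

section Perfect

variable {G A : Type*} [Group G] [CommGroup A]

theorem MonoidHom.eq_one_of_commutator_eq_top (hG : commutator G = ⊤) (f : G →* A) : f = 1 :=
  MonoidHom.ext fun g => (hG ▸ Abelianization.commutator_subset_ker f) (Subgroup.mem_top g)

theorem commutator_prod_eq_top {G' : Type*} [Group G'] (hG : commutator G = ⊤)
    (hG' : commutator G' = ⊤) : commutator (G × G') = ⊤ := by
  rw [commutator_def, ← Subgroup.top_prod_top, Subgroup.commutator_prod_prod, ← commutator_def,
    ← commutator_def, hG, hG', Subgroup.top_prod_top]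

end Perfect

section Base

variable {Γ H : Type*} [Group Γ] [AddCommGroup H]

@[simp]
theorem coordSum_single (j : Γ) (a : H) : coordSum Γ H (Finsupp.single j a) = a := by
  simp [coordSum]

theorem coordSum_domCongr (e : Γ ≃ Γ) (x : Γ →₀ H) :
    coordSum Γ H (Finsupp.domCongr e x) = coordSum Γ H x :=
  coordSum_equivMapDomain e x

theorem eq_zero_of_mulLeft_invariant_on_ker_coordSum {A : Type*} [AddCommGroup A]
    (hΓ : commutator Γ = ⊤) (χ : (Γ →₀ H) →+ A) (hχ₁ : ∀ a, χ (Finsupp.single 1 a) = 0)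
    (hχ : ∀ (g : Γ) (x : Γ →₀ H), x ∈ (coordSum Γ H).ker →
      χ (Finsupp.domCongr (Equiv.mulLeft g) x) = χ x) :
    χ = 0 := by
  refine Finsupp.addHom_ext fun j a => ?_
  let f : Γ →* Multiplicative A :=
    { toFun := fun j => Multiplicative.ofAdd (χ (Finsupp.single j a))
      map_one' := by simp [hχ₁]
      map_mul' := fun j k => by
        have hshift : χ (Finsupp.single (j * k) a) - χ (Finsupp.single j a) =
            χ (Finsupp.single k a) := by
          have h := hχ j (Finsupp.single k a - Finsupp.single 1 a) (by simp)
          rw [map_sub, map_sub, map_sub] at h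
          simpa [hχ₁] using h
        rw [← ofAdd_add, ← hshift, add_sub_cancel] }
  simpa [f] using
    congrArg Multiplicative.toAdd (DFunLike.congr_fun (f.eq_one_of_commutator_eq_top hΓ) j)

noncomputable def coordSumKerRetraction (Γ H : Type*) [Group Γ] [AddCommGroup H] :
    (Γ →₀ H) →+ (coordSum Γ H).ker :=
  (AddMonoidHom.id _ - (Finsupp.singleAddHom 1).comp (coordSum Γ H)).codRestrict _ fun x => by
    simp

theorem coordSumKerRetraction_of_mem {x : Γ →₀ H} (hx : x ∈ (coordSum Γ H).ker) :
    coordSumKerRetraction Γ H x = ⟨x, hx⟩ := by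
  ext1
  simp [coordSumKerRetraction, AddMonoidHom.mem_ker.mp hx]

theorem coordSumKerRetraction_single_one (a : H) :
    coordSumKerRetraction Γ H (Finsupp.single 1 a) = 0 := by
  ext1
  simp [coordSumKerRetraction]

end Base

section Wreath

variable {Γ H : Type*} [Group Γ] [AddCommGroup H]

theorem mem_lrG0 {w : LRWreath Γ H} :
    w ∈ lrG0 Γ H ↔ coordSum Γ H (Multiplicative.toAdd w.left) = 0 :=
  ofAdd_eq_one

noncomputable def lrInl (Γ H : Type*) [Group Γ] [AddCommGroup H] :
    Multiplicative (coordSum Γ H).ker →* lrG0 Γ H :=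
  (SemidirectProduct.inl.comp
    (AddMonoidHom.toMultiplicative (coordSum Γ H).ker.subtype)).codRestrict _ fun x =>
      mem_lrG0.mpr (AddMonoidHom.mem_ker.mp x.toAdd.2)

noncomputable def lrInr (Γ H : Type*) [Group Γ] [AddCommGroup H] : (Γ × Γ) →* lrG0 Γ H :=
  SemidirectProduct.inr.codRestrict _ fun _ => mem_lrG0.mpr (by simp)

theorem lrInl_mul_lrInr (w : lrG0 Γ H) :
    lrInl Γ H (Multiplicative.ofAdd ⟨Multiplicative.toAdd w.1.left, mem_lrG0.mp w.2⟩) *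
      lrInr Γ H w.1.right = w :=
  Subtype.ext (SemidirectProduct.inl_left_mul_inr_right w.1)

theorem lrInr_mul_lrInl_mul_inv (p : Γ × Γ) (y : (coordSum Γ H).ker) :
    lrInr Γ H p * lrInl Γ H (Multiplicative.ofAdd y) * (lrInr Γ H p)⁻¹ =
      lrInl Γ H (Multiplicative.ofAdd ⟨Finsupp.domCongr (lrEquiv p) y,
        (coordSum_domCongr _ _).trans y.2⟩) := by
  ext1
  simp only [Subgroup.coe_mul, Subgroup.coe_inv, lrInl, lrInr, MonoidHom.codRestrict_apply,
    MonoidHom.comp_apply]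
  rw [← map_inv, ← SemidirectProduct.inl_aut]
  rfl

theorem lrEquiv_mk_one (g : Γ) : lrEquiv (g, 1) = Equiv.mulLeft g := by
  ext k
  simp [lrEquiv]

theorem MonoidHom.comp_lrInl_eq_one {A : Type*} [CommGroup A] (hΓ : commutator Γ = ⊤)
    (φ : lrG0 Γ H →* A) : φ.comp (lrInl Γ H) = 1 := by
  set χ : (Γ →₀ H) →+ Additive A :=
    (MonoidHom.toAdditiveRight (φ.comp (lrInl Γ H))).comp (coordSumKerRetraction Γ H)
  have hχ : χ = 0 := by
    refine eq_zero_of_mulLeft_invariant_on_ker_coordSum hΓ χ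
      (fun a => by simp [χ, coordSumKerRetraction_single_one]) fun g x hx => ?_
    have hgx : Finsupp.domCongr (Equiv.mulLeft g) x ∈ (coordSum Γ H).ker :=
      (coordSum_domCongr _ _).trans hx
    have hconj : lrInl Γ H (Multiplicative.ofAdd ⟨_, hgx⟩) = lrInr Γ H (g, 1) *
        lrInl Γ H (Multiplicative.ofAdd ⟨x, hx⟩) * (lrInr Γ H (g, 1))⁻¹ := by
      simp only [lrInr_mul_lrInl_mul_inv, lrEquiv_mk_one]
    simp only [χ, AddMonoidHom.comp_apply, coordSumKerRetraction_of_mem hx,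
      coordSumKerRetraction_of_mem hgx]
    refine congrArg Additive.ofMul ?_
    change φ _ = φ _
    rw [hconj, map_mul, map_mul, map_inv, mul_inv_cancel_comm]
  ext y
  simpa [χ, coordSumKerRetraction_of_mem] using DFunLike.congr_fun hχ (y : Γ →₀ H)

end Wreath

theorem stmt_10_general {Γ H : Type*} [Group Γ] [AddCommGroup H]
    (hab : commutator Γ = ⊤)
    (φ : lrG0 Γ H →* Circle) :
    φ = 1 := by
  have hinl : φ.comp (lrInl Γ H) = 1 := φ.comp_lrInl_eq_one hab
  have hinr : φ.comp (lrInr Γ H) = 1 :=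
    (φ.comp (lrInr Γ H)).eq_one_of_commutator_eq_top (commutator_prod_eq_top hab hab)
  ext w
  rw [MonoidHom.one_apply, ← lrInl_mul_lrInr w, map_mul, ← MonoidHom.comp_apply, hinl,
    ← MonoidHom.comp_apply, hinr, MonoidHom.one_apply, MonoidHom.one_apply, one_mul]

/-- if `Γ` has trivial abelianization and `H` is a nontrivial abelian group,
then the group `𝓖₀ = 𝓗₀ ⋊ (Γ × Γ)`, with `𝓗₀ = ker (p : H^(Γ) → H)`, has no nontrivial
homomorphism to the circle group. -/
theorem stmt_10 {Γ H : Type*} [Group Γ] [AddCommGroup H] [Nontrivial H]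
    (hab : commutator Γ = ⊤)
    (φ : lrG0 Γ H →* Circle) :
    φ = 1 :=
  stmt_10_general hab φ
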